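/- arXiv:1008.4850 — 2 statements merged into one kernel-verified Lean document; each statement's English description precedes it below -/
import Mathlib

section
/- For every integer N ≥ 1 there exists a rational number B_N < 1 such that for every nondecreasing finite sequence of integers 2 ≤ a_1 ≤ ... ≤ a_N with ∑_{j=1}^{N} 1/a_j < 1, one has ∑_{j=1}^{N} 1/a_j ≤ B_N. -/
/-- Key lemma: if `a j ≥ 1` and `∑ 1/a j < 1` then the deficiency is at least
`1 / ∏ a j`. -/
lemma egyptian_key (n : ℕ) (a : Fin n → ℤ) (ha : ∀ j, 1 ≤ a j)
    (h : (∑ j, (1 : ℚ) / (a j : ℚ)) < 1) :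
    (∑ j, (1 : ℚ) / (a j : ℚ)) ≤ 1 - 1 / (∏ j, (a j : ℚ)) := by
  set S := ∑ j, (1 : ℚ) / (a j : ℚ) with hS
  set P := ∏ j, (a j : ℚ) with hP
  have hpos : ∀ j, (0 : ℚ) < (a j : ℚ) := by
    intro j; exact_mod_cast lt_of_lt_of_le zero_lt_one (ha j)
  have hPpos : 0 < P := Finset.prod_pos fun j _ => hpos j
  have h1 : ∀ j, P * ((1 : ℚ) / (a j : ℚ)) = ∏ i ∈ Finset.univ.erase j, (a i : ℚ) := by
    intro j
    have := Finset.mul_prod_erase Finset.univ (fun i => (a i : ℚ)) (Finset.mem_univ j)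
    rw [hP, ← this]
    field_simp [(hpos j).ne']
  have hPS : P * S = ∑ j, ∏ i ∈ Finset.univ.erase j, (a i : ℚ) := by
    rw [hS, Finset.mul_sum]
    exact Finset.sum_congr rfl fun j _ => h1 j
  set T : ℤ := (∏ j, a j) - ∑ j, ∏ i ∈ Finset.univ.erase j, a i with hT
  have hTQ : (T : ℚ) = P * (1 - S) := by
    rw [hT, mul_sub, mul_one, hPS, hP]
    push_cast
    ring
  have hTpos : (0 : ℚ) < (T : ℚ) := by
    rw [hTQ]
    exact mul_pos hPpos (by linarith)
  have hT1 : (1 : ℤ) ≤ T := by exact_mod_cast hTpos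
  have : (1 : ℚ) ≤ P * (1 - S) := by rw [← hTQ]; exact_mod_cast hT1
  have h2 : 1 / P ≤ 1 - S := by
    rw [div_le_iff₀ hPpos]; linarith
  linarith

/-- Proposition 7.17: for every `N ≥ 1` there is a bound `B_N < 1` such that any
Egyptian fraction sum `∑_{j=1}^N 1/a_j < 1` with integers `2 ≤ a_1 ≤ ... ≤ a_N`
satisfies `∑ 1/a_j ≤ B_N`. -/
theorem egyptian_fraction_bound (N : ℕ) (hN : 1 ≤ N) :
    ∃ B : ℚ, B < 1 ∧ ∀ a : Fin N → ℤ, Monotone a → (∀ j, 2 ≤ a j) →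
      (∑ j, (1 : ℚ) / (a j : ℚ)) < 1 → (∑ j, (1 : ℚ) / (a j : ℚ)) ≤ B := by
  induction N, hN using Nat.le_induction with
  | base =>
    refine ⟨1/2, by norm_num, fun a _ h2 _ => ?_⟩
    rw [Fin.sum_univ_one]
    have : (2 : ℚ) ≤ (a 0 : ℚ) := by exact_mod_cast h2 0
    rw [div_le_div_iff₀ (by linarith) (by norm_num)]
    linarith
  | succ N hN ih =>
    obtain ⟨B', hB', hBound⟩ := ih
    set M : ℕ := ⌈(2 : ℚ) / (1 - B')⌉₊ + 1 with hM
    have hM1 : (1 : ℚ) ≤ (M : ℚ) := by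
      have : 1 ≤ M := Nat.le_add_left 1 _
      exact_mod_cast this
    have hMpos : (0 : ℚ) < (M : ℚ) := by linarith
    have hMbig : (2 : ℚ) / (1 - B') ≤ (M : ℚ) := by
      have := Nat.le_ceil ((2 : ℚ) / (1 - B'))
      have h2 : (⌈(2 : ℚ) / (1 - B')⌉₊ : ℚ) ≤ (M : ℚ) := by
        rw [hM]; push_cast; linarith
      linarith
    have hinvM : (1 : ℚ) / (M : ℚ) ≤ (1 - B') / 2 := by
      rw [div_le_div_iff₀ hMpos (by norm_num)]
      have h2 : (0 : ℚ) < 1 - B' := by linarith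
      rw [div_le_iff₀ h2] at hMbig
      linarith
    have hpowpos : (0 : ℚ) < (M : ℚ) ^ (N + 1) := pow_pos hMpos _
    refine ⟨max (B' + 1 / M) (1 - 1 / (M : ℚ) ^ (N + 1)), ?_, ?_⟩
    · apply max_lt
      · linarith [hinvM]
      · have : (0 : ℚ) < 1 / (M : ℚ) ^ (N + 1) := by positivity
        linarith
    intro a hmono h2 hsum
    have hpos : ∀ j, (0 : ℚ) < (a j : ℚ) := by
      intro j; exact_mod_cast lt_of_lt_of_le zero_lt_two (h2 j)
    by_cases hcase : a (Fin.last N) ≤ (M : ℤ)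
    · -- all terms bounded by M, use key lemma
      have hall : ∀ j, (a j : ℚ) ≤ (M : ℚ) := by
        intro j
        have := hmono (Fin.le_last j)
        exact_mod_cast le_trans this hcase
      have hprod : (∏ j, (a j : ℚ)) ≤ (M : ℚ) ^ (N + 1) := by
        calc (∏ j, (a j : ℚ)) ≤ ∏ _j : Fin (N+1), (M : ℚ) :=
              Finset.prod_le_prod (fun j _ => (hpos j).le) (fun j _ => hall j)
          _ = (M : ℚ) ^ (N + 1) := by simp
      have hkey := egyptian_key (N + 1) a (fun j => le_trans one_le_two (h2 j)) hsum
      have hPpos : 0 < ∏ j, (a j : ℚ) := Finset.prod_pos fun j _ => hpos j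
      have : (1 : ℚ) / (M : ℚ) ^ (N + 1) ≤ 1 / ∏ j, (a j : ℚ) :=
        one_div_le_one_div_of_le hPpos hprod
      exact le_max_of_le_right (by linarith)
    · -- last term > M, use induction hypothesis on first N terms
      push_neg at hcase
      have hsplit : (∑ j, (1 : ℚ) / (a j : ℚ)) =
          (∑ j : Fin N, (1 : ℚ) / (a (Fin.castSucc j) : ℚ)) + 1 / (a (Fin.last N) : ℚ) :=
        Fin.sum_univ_castSucc _
      have hlastpos : (0 : ℚ) < 1 / (a (Fin.last N) : ℚ) := one_div_pos.mpr (hpos _)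
      have hS' : (∑ j : Fin N, (1 : ℚ) / (a (Fin.castSucc j) : ℚ)) < 1 := by
        rw [hsplit] at hsum; linarith
      have hB'applied := hBound (a ∘ Fin.castSucc)
        (hmono.comp Fin.strictMono_castSucc.monotone) (fun j => h2 _) hS'
      have hlast : (1 : ℚ) / (a (Fin.last N) : ℚ) ≤ 1 / (M : ℚ) := by
        apply one_div_le_one_div_of_le hMpos
        exact_mod_cast hcase.le
      refine le_max_of_le_left ?_
      rw [hsplit]
      calc (∑ j : Fin N, (1 : ℚ) / (a (Fin.castSucc j) : ℚ)) + 1 / (a (Fin.last N) : ℚ)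
          ≤ B' + 1 / (M : ℚ) := add_le_add hB'applied hlast
end

section
/- For every integer N ≥ 1, the set of N-tuples of integers (a_1,...,a_N) with 2 ≤ a_1 ≤ ... ≤ a_N and ∑_{j=1}^{N} 1/a_j < 1 but ∑_{j=1}^{N-1} 1/a_j + 1/(a_N - 1) ≥ 1 is finite. -/
/-!
Write `S_k = ∑_{i<k} 1/a_i`. Every later term `1/a_i` (`k ≤ i < N`) is at most `1/a_k`, and
`1/(a_N - 1) ≤ 2/a_k`, so the extremal condition gives `1 - S_k ≤ (N + 1)/a_k`. On the other
hand `1 - S_k` is positive with denominator dividing `∏_{i<k} a_i`, so `1 - S_k ≥ 1/∏_{i<k} a_i`.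
Hence `a_k ≤ (N + 1) ∏_{i<k} a_i`, and by induction on `k` every entry is bounded.
-/

open Finset

theorem one_div_prod_le_one_sub_sum_one_div {ι : Type*} (s : Finset ι) (a : ι → ℤ)
    (ha : ∀ i ∈ s, 0 < a i) (hs : ∑ i ∈ s, (1 : ℚ) / a i < 1) :
    1 / ∏ i ∈ s, (a i : ℚ) ≤ 1 - ∑ i ∈ s, (1 : ℚ) / a i := by
  classical
  have hP : (0 : ℚ) < ∏ i ∈ s, (a i : ℚ) := prod_pos fun i hi => by exact_mod_cast ha i hi
  have hint : (1 - ∑ i ∈ s, (1 : ℚ) / a i) * ∏ i ∈ s, (a i : ℚ)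
      = ((∏ i ∈ s, a i - ∑ i ∈ s, ∏ j ∈ s.erase i, a j : ℤ) : ℚ) := by
    push_cast
    rw [sub_mul, one_mul, sum_mul]
    congr 1
    refine sum_congr rfl fun i hi => ?_
    have hai : (a i : ℚ) ≠ 0 := by exact_mod_cast (ha i hi).ne'
    rw [← mul_prod_erase s _ hi, one_div, inv_mul_cancel_left₀ hai]
  have hpos : (0 : ℚ) < (1 - ∑ i ∈ s, (1 : ℚ) / a i) * ∏ i ∈ s, (a i : ℚ) :=
    mul_pos (sub_pos.2 hs) hP
  rw [hint] at hpos
  rw [div_le_iff₀ hP, hint]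
  exact_mod_cast (Int.cast_pos.1 hpos : (0 : ℤ) < _)

def extremalEgyptianTuples (n : ℕ) : Set (Fin (n + 1) → ℤ) :=
  {a | Monotone a ∧ (∀ j, 2 ≤ a j) ∧
      (∑ j, (1 : ℚ) / (a j : ℚ)) < 1 ∧
      1 ≤ (∑ j ∈ Finset.univ.erase (Fin.last n), (1 : ℚ) / (a j : ℚ))
            + 1 / ((a (Fin.last n) : ℚ) - 1)}

namespace extremalEgyptianTuples

variable {n : ℕ} {a : Fin (n + 1) → ℤ}

theorem one_sub_sum_Iio_le (ha : a ∈ extremalEgyptianTuples n) (k : Fin (n + 1)) :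
    1 - ∑ i ∈ Iio k, (1 : ℚ) / a i ≤ (n + 2) / a k := by
  obtain ⟨hmono, ha2, -, hext⟩ := ha
  have ha2' : ∀ i, (2 : ℚ) ≤ a i := fun i => by exact_mod_cast ha2 i
  have hak : (0 : ℚ) < a k := by linarith [ha2' k]
  have hle : ∀ {i}, k ≤ i → (1 : ℚ) / a i ≤ 1 / a k := fun h =>
    one_div_le_one_div_of_le hak (by exact_mod_cast hmono h)
  have hhead : ∑ i ∈ univ.erase (Fin.last n) ∩ Iio k, (1 : ℚ) / a i
      ≤ ∑ i ∈ Iio k, (1 : ℚ) / a i :=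
    sum_le_sum_of_subset_of_nonneg inter_subset_right fun i _ _ => by
      have := ha2' i; positivity
  have htail : ∑ i ∈ univ.erase (Fin.last n) \ Iio k, (1 : ℚ) / a i ≤ n / a k := by
    refine (sum_le_card_nsmul _ (fun i => (1 : ℚ) / a i) (1 / a k) fun i hi => hle ?_).trans ?_
    · simpa using (mem_sdiff.1 hi).2
    · have : #(univ.erase (Fin.last n) \ Iio k) ≤ n :=
        (card_le_card sdiff_subset).trans (by simp)
      rw [nsmul_eq_mul, mul_one_div]
      gcongr
  have hlast : 1 / ((a (Fin.last n) : ℚ) - 1) ≤ 2 / a k := by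
    have hkl : (a k : ℚ) ≤ a (Fin.last n) := by exact_mod_cast hmono (Fin.le_last k)
    rw [div_le_div_iff₀ (by linarith [ha2' (Fin.last n)]) hak]
    linarith [ha2' k]
  rw [← sum_inter_add_sum_sdiff _ (Iio k)] at hext
  rw [add_div]
  linarith

theorem le_mul_prod_Iio (ha : a ∈ extremalEgyptianTuples n) (k : Fin (n + 1)) :
    a k ≤ (n + 2) * ∏ i ∈ Iio k, a i := by
  have hpos : ∀ i, 0 < a i := fun i => by linarith [ha.2.1 i]
  have hprefix : ∑ i ∈ Iio k, (1 : ℚ) / a i < 1 :=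
    (sum_le_sum_of_subset_of_nonneg (subset_univ _) fun i _ _ => by
      have : (0 : ℚ) < a i := by exact_mod_cast hpos i
      positivity).trans_lt ha.2.2.1
  have hP : (0 : ℚ) < ∏ i ∈ Iio k, (a i : ℚ) := prod_pos fun i _ => by exact_mod_cast hpos i
  have hak : (0 : ℚ) < a k := by exact_mod_cast hpos k
  have h := (one_div_prod_le_one_sub_sum_one_div _ a (fun i _ => hpos i) hprefix).trans
    (one_sub_sum_Iio_le ha k)
  rw [div_le_div_iff₀ hP hak, one_mul] at h
  exact_mod_cast h

theorem exists_bound_of_val_lt (m : ℕ) :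
    ∃ B : ℤ, ∀ a ∈ extremalEgyptianTuples n, ∀ i : Fin (n + 1), (i : ℕ) < m → a i ≤ B := by
  induction m with
  | zero => exact ⟨0, fun _ _ _ hi => absurd hi (Nat.not_lt_zero _)⟩
  | succ m ih =>
    obtain ⟨B, hbound⟩ := ih
    refine ⟨max B ((n + 2) * B ^ m), fun a ha i hi => ?_⟩
    rcases Nat.lt_succ_iff_lt_or_eq.1 hi with hi | hi
    · exact le_max_of_le_left (hbound a ha i hi)
    refine le_max_of_le_right ((le_mul_prod_Iio ha i).trans ?_)
    gcongr
    calc ∏ j ∈ Iio i, a j ≤ ∏ _j ∈ Iio i, B :=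
          prod_le_prod (fun j _ => by linarith [ha.2.1 j])
            fun j hj => hbound a ha j (hi ▸ Fin.lt_def.1 (mem_Iio.1 hj))
      _ = B ^ m := by rw [prod_const, Fin.card_Iio, hi]

end extremalEgyptianTuples

/-- Finiteness step in Proposition 7.17: for each `N = n+1 ≥ 1`, the set of
nondecreasing tuples of integers `≥ 2` with `∑ 1/a_j < 1` but
`∑_{j<N} 1/a_j + 1/(a_N - 1) ≥ 1` is finite. -/
theorem egyptian_fraction_extremal_finite (n : ℕ) :
    Set.Finite {a : Fin (n + 1) → ℤ | Monotone a ∧ (∀ j, 2 ≤ a j) ∧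
      (∑ j, (1 : ℚ) / (a j : ℚ)) < 1 ∧
      1 ≤ (∑ j ∈ Finset.univ.erase (Fin.last n), (1 : ℚ) / (a j : ℚ))
            + 1 / ((a (Fin.last n) : ℚ) - 1)} := by
  obtain ⟨B, hB⟩ := extremalEgyptianTuples.exists_bound_of_val_lt (n := n) (n + 1)
  exact (Set.Finite.pi' fun _ => Set.finite_Icc 2 B).subset fun a ha i =>
    ⟨ha.2.1 i, hB a ha i i.isLt⟩
end
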